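/- Let f, g, λ : [a,b] → ℝ and h : [a,b] → ℂ be continuous, with λ(t) an eigenvalue of the Hermitian matrix A(t) = [[f(t), h(t)], [h̄(t), g(t)]] for each t, and suppose A(t) has distinct eigenvalues for all t. If (tₙ) is a monotone increasing sequence in [a,b] such that for each n, f(tₙ) = λ(tₙ) or g(tₙ) = λ(tₙ), and these alternate (f(tₙ) = λ(tₙ) implies g(tₙ₊₁) = λ(tₙ₊₁) and vice versa), then (tₙ) cannot converge to a point of [a,b]; hence no such infinite sequence exists. -/

import Mathlib

/-!
Along the sequence, `f = λ` and `g = λ` each hold for infinitely many indices, because the two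
equalities alternate. The monotone sequence converges in `[a, b]`, and by continuity both equalities
hold at the limit `c`. There the characteristic polynomial `(λ - f)(λ - g) - |h|²` of `A(c)` reduces
to `-|h(c)|²`, so `h(c) = 0` and the discriminant `(f - g)² + 4|h|²` vanishes at `c`: the
eigenvalues of `A(c)` coincide.
-/

open Matrix Set Filter Topology

lemma Filter.frequently_atTop_of_forall_or_succ {P : ℕ → Prop} (hP : ∀ n, P n ∨ P (n + 1)) :
    ∃ᶠ n in atTop, P n :=
  frequently_atTop.2 fun n => (hP n).elim (fun h => ⟨n, le_rfl, h⟩) fun h => ⟨n + 1, n.le_succ, h⟩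

lemma Monotone.exists_tendsto_nhdsWithin {α ι : Type*} [ConditionallyCompleteLinearOrder α]
    [TopologicalSpace α] [OrderTopology α] [SemilatticeSup ι] [Nonempty ι] {s : Set α}
    (hs : IsClosed s) (hbdd : BddAbove s) {t : ι → α} (hmono : Monotone t) (hmem : ∀ i, t i ∈ s) :
    ∃ c ∈ s, Tendsto t atTop (𝓝[s] c) := by
  have hlim : Tendsto t atTop (𝓝 (⨆ i, t i)) :=
    tendsto_atTop_ciSup hmono (hbdd.mono (range_subset_iff.2 hmem))
  exact ⟨_, hs.mem_of_tendsto hlim (.of_forall hmem),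
    tendsto_nhdsWithin_of_tendsto_nhds_of_eventually_within t hlim (.of_forall hmem)⟩

lemma ContinuousOn.eq_of_tendsto_of_frequently_eq {X Y ι : Type*} [TopologicalSpace X]
    [TopologicalSpace Y] [T2Space Y] {f g : X → Y} {s : Set X} {x : X} {u : ι → X} {l : Filter ι}
    (hf : ContinuousOn f s) (hg : ContinuousOn g s) (hx : x ∈ s) (hu : Tendsto u l (𝓝[s] x))
    (hfreq : ∃ᶠ n in l, f (u n) = g (u n)) : f x = g x :=
  tendsto_nhds_unique_of_frequently_eq ((hf x hx).tendsto.comp hu) ((hg x hx).tendsto.comp hu) hfreq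

lemma det_smul_one_sub_hermitian_fin_two (μ x y : ℝ) (z : ℂ) :
    det ((μ : ℂ) • (1 : Matrix (Fin 2) (Fin 2) ℂ) - !![(x : ℂ), z; star z, (y : ℂ)]) =
      (((μ - x) * (μ - y) - ‖z‖ ^ 2 : ℝ) : ℂ) := by
  simp [det_fin_two, Complex.mul_conj, Complex.normSq_eq_norm_sq]

theorem no_infinite_alternating_sequence_general
    (a b : ℝ) (f g lam : ℝ → ℝ) (h : ℝ → ℂ)
    (hf : ContinuousOn f (Icc a b)) (hg : ContinuousOn g (Icc a b))
    (hlam : ContinuousOn lam (Icc a b))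
    (A : ℝ → Matrix (Fin 2) (Fin 2) ℂ)
    (hA : ∀ t, A t = !![(f t : ℂ), h t; star (h t), (g t : ℂ)])
    (heig : ∀ t ∈ Icc a b,
      det (((lam t : ℝ) : ℂ) • (1 : Matrix (Fin 2) (Fin 2) ℂ) - A t) = 0)
    (hdist : ∀ t ∈ Icc a b, (f t - g t) ^ 2 + 4 * ‖h t‖ ^ 2 ≠ 0)
    (t : ℕ → ℝ) (hmono : Monotone t) (hmem : ∀ n, t n ∈ Icc a b)
    (halt₀ : ∀ n, f (t n) = lam (t n) ∨ g (t n) = lam (t n))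
    (halt₁ : ∀ n, f (t n) = lam (t n) → g (t (n + 1)) = lam (t (n + 1)))
    (halt₂ : ∀ n, g (t n) = lam (t n) → f (t (n + 1)) = lam (t (n + 1))) :
    False := by
  obtain ⟨c, hc, htc⟩ := hmono.exists_tendsto_nhdsWithin isClosed_Icc bddAbove_Icc hmem
  have hfc : f c = lam c := hf.eq_of_tendsto_of_frequently_eq hlam hc htc <|
    frequently_atTop_of_forall_or_succ fun n => (halt₀ n).imp_right (halt₂ n)
  have hgc : g c = lam c := hg.eq_of_tendsto_of_frequently_eq hlam hc htc <|
    frequently_atTop_of_forall_or_succ fun n => (halt₀ n).symm.imp_right (halt₁ n)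
  have hdet := heig c hc
  rw [hA, det_smul_one_sub_hermitian_fin_two, hfc, hgc, Complex.ofReal_eq_zero] at hdet
  exact hdist c hc (by rw [hfc, hgc]; linarith)

theorem no_infinite_alternating_sequence
    (a b : ℝ) (f g lam : ℝ → ℝ) (h : ℝ → ℂ)
    (hf : ContinuousOn f (Icc a b)) (hg : ContinuousOn g (Icc a b))
    (hh : ContinuousOn h (Icc a b)) (hlam : ContinuousOn lam (Icc a b))
    (A : ℝ → Matrix (Fin 2) (Fin 2) ℂ)
    (hA : ∀ t, A t = !![(f t : ℂ), h t; star (h t), (g t : ℂ)])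
    (heig : ∀ t ∈ Icc a b,
      det (((lam t : ℝ) : ℂ) • (1 : Matrix (Fin 2) (Fin 2) ℂ) - A t) = 0)
    (hdist : ∀ t ∈ Icc a b, (f t - g t) ^ 2 + 4 * ‖h t‖ ^ 2 ≠ 0)
    (t : ℕ → ℝ) (hmono : Monotone t) (hmem : ∀ n, t n ∈ Icc a b)
    (halt₀ : ∀ n, f (t n) = lam (t n) ∨ g (t n) = lam (t n))
    (halt₁ : ∀ n, f (t n) = lam (t n) → g (t (n + 1)) = lam (t (n + 1)))
    (halt₂ : ∀ n, g (t n) = lam (t n) → f (t (n + 1)) = lam (t (n + 1))) :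
    False :=
  no_infinite_alternating_sequence_general a b f g lam h hf hg hlam A hA heig hdist t hmono hmem
    halt₀ halt₁ halt₂
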